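/- arXiv:2603.12552 — 3 statements merged into one kernel-verified Lean document; each statement's English description precedes it below -/
import Mathlib

section
/- Let s_1, …, s_n be real numbers with a unique maximizer k* (s_{k*} > s_k for all k ≠ k*), let v_1, …, v_n ∈ ℝ^d be fixed vectors, and let p_k(β) = exp(β s_k)/Σ_l exp(β s_l). Define the covariance matrix Cov(β) = Σ_k p_k(β) v_k v_k^T - (Σ_k p_k(β) v_k)(Σ_k p_k(β) v_k)^T. Then β² · Cov(β) → 0 (entrywise, equivalently in operator norm) as β → ∞; in particular the covariance of the gradients under the softmax distribution decays faster than 1/β². -/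
open Real Finset Filter

lemma pow_mul_exp_neg_mul_tendsto (m : ℕ) {c : ℝ} (hc : 0 < c) :
    Tendsto (fun β : ℝ => β ^ m * Real.exp (-(c * β))) atTop (nhds 0) := by
  have h := (tendsto_pow_mul_exp_neg_atTop_nhds_zero m).comp
    (tendsto_id.const_mul_atTop hc)
  have h2 : Tendsto (fun β : ℝ => c ^ m * (β ^ m * Real.exp (-(c * β)))) atTop (nhds 0) := by
    refine h.congr' ?_
    filter_upwards [eventually_ge_atTop 0] with β _
    simp [Function.comp, mul_pow, mul_assoc, id]
  have := h2.const_mul ((c : ℝ) ^ m)⁻¹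
  simp only [mul_zero] at this
  refine this.congr' ?_
  filter_upwards with β
  field_simp

/-- For reals `s_1, …, s_n` with a unique maximizer `k*`, fixed vectors
`v_1, …, v_n ∈ ℝ^d`, and softmax probabilities `p_k(β)`, the covariance matrix
`Cov(β) = Σ_k p_k(β) v_k v_kᵀ - (Σ_k p_k(β) v_k)(Σ_k p_k(β) v_k)ᵀ` satisfies
`β² · Cov(β) → 0` entrywise as `β → ∞` (covariance decays faster than `1/β²`). -/
theorem softmax_covariance_decay
    (n d : ℕ) (s : Fin n → ℝ) (kstar : Fin n)
    (hks : ∀ k, k ≠ kstar → s k < s kstar)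
    (v : Fin n → Fin d → ℝ)
    (p : Fin n → ℝ → ℝ)
    (hp : ∀ k β, p k β = Real.exp (β * s k) / ∑ l, Real.exp (β * s l))
    (Cov : ℝ → Matrix (Fin d) (Fin d) ℝ)
    (hCov : ∀ β a b, Cov β a b =
      (∑ k, p k β * (v k a * v k b))
        - (∑ k, p k β * v k a) * (∑ k, p k β * v k b)) :
    ∀ a b : Fin d,
      Tendsto (fun β : ℝ => β ^ 2 * Cov β a b) atTop (nhds 0) := by
  intro a b
  have hSpos : ∀ β : ℝ, 0 < ∑ l, Real.exp (β * s l) := by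
    intro β
    exact Finset.sum_pos (fun l _ => Real.exp_pos _) ⟨kstar, Finset.mem_univ _⟩
  have hp_nonneg : ∀ k β, 0 ≤ p k β := by
    intro k β
    rw [hp]
    exact div_nonneg (Real.exp_pos _).le (hSpos β).le
  have hp_le : ∀ k β, p k β ≤ Real.exp (-((s kstar - s k) * β)) := by
    intro k β
    rw [hp, div_le_iff₀ (hSpos β)]
    have h1 : Real.exp (β * s kstar) ≤ ∑ l, Real.exp (β * s l) :=
      Finset.single_le_sum (f := fun l => Real.exp (β * s l))
        (fun l _ => (Real.exp_pos _).le) (Finset.mem_univ kstar)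
    calc Real.exp (β * s k) = Real.exp (-((s kstar - s k) * β)) * Real.exp (β * s kstar) := by
          rw [← Real.exp_add]; ring_nf
      _ ≤ _ := by
          apply mul_le_mul_of_nonneg_left h1 (Real.exp_pos _).le
  -- key decay lemma
  have key : ∀ (m : ℕ) (k : Fin n), k ≠ kstar →
      Tendsto (fun β : ℝ => β ^ m * p k β) atTop (nhds 0) := by
    intro m k hk
    have hc : 0 < s kstar - s k := sub_pos.mpr (hks k hk)
    have hbound := pow_mul_exp_neg_mul_tendsto m hc
    refine squeeze_zero' ?_ ?_ hbound
    · filter_upwards [eventually_ge_atTop 0] with β hβ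
      exact mul_nonneg (pow_nonneg hβ m) (hp_nonneg k β)
    · filter_upwards [eventually_ge_atTop 0] with β hβ
      exact mul_le_mul_of_nonneg_left (hp_le k β) (pow_nonneg hβ m)
  have hsum1 : ∀ β : ℝ, ∑ k, p k β = 1 := by
    intro β
    simp only [hp]
    rw [← Finset.sum_div, div_self (hSpos β).ne']
  -- centered rewrite
  have hrw : ∀ β : ℝ, Cov β a b =
      (∑ k, p k β * ((v k a - v kstar a) * (v k b - v kstar b)))
        - (∑ k, p k β * (v k a - v kstar a)) * (∑ k, p k β * (v k b - v kstar b)) := by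
    intro β
    rw [hCov]
    have e1 : ∑ k, p k β * ((v k a - v kstar a) * (v k b - v kstar b)) =
        (∑ k, p k β * (v k a * v k b)) - v kstar b * (∑ k, p k β * v k a)
          - v kstar a * (∑ k, p k β * v k b)
          + v kstar a * v kstar b * (∑ k, p k β) := by
      rw [Finset.mul_sum, Finset.mul_sum, Finset.mul_sum, ← Finset.sum_sub_distrib,
        ← Finset.sum_sub_distrib, ← Finset.sum_add_distrib]
      exact Finset.sum_congr rfl (fun k _ => by ring)
    have e3 : ∀ c : Fin d, ∑ k, p k β * (v k c - v kstar c)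
        = (∑ k, p k β * v k c) - v kstar c := by
      intro c
      simp only [mul_sub]
      rw [Finset.sum_sub_distrib, ← Finset.sum_mul, hsum1, one_mul]
    have e4 := e3 b
    have e3 := e3 a
    rw [e1, e3, e4, hsum1]
    ring
  have hA : Tendsto (fun β : ℝ =>
      β ^ 2 * ∑ k, p k β * ((v k a - v kstar a) * (v k b - v kstar b))) atTop (nhds 0) := by
    have : ∀ β : ℝ, β ^ 2 * ∑ k, p k β * ((v k a - v kstar a) * (v k b - v kstar b)) =
        ∑ k, (β ^ 2 * p k β) * ((v k a - v kstar a) * (v k b - v kstar b)) := by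
      intro β; rw [Finset.mul_sum]; exact Finset.sum_congr rfl (fun k _ => by ring)
    simp only [this]
    have : (0 : ℝ) = ∑ _k : Fin n, (0 : ℝ) := by simp
    rw [this]
    apply tendsto_finset_sum
    intro k _
    by_cases hk : k = kstar
    · subst hk; simp
    · simpa using (key 2 k hk).mul_const ((v k a - v kstar a) * (v k b - v kstar b))
  have hB : ∀ (c : Fin d),
      Tendsto (fun β : ℝ => β * ∑ k, p k β * (v k c - v kstar c)) atTop (nhds 0) := by
    intro c
    have : ∀ β : ℝ, β * ∑ k, p k β * (v k c - v kstar c) =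
        ∑ k, (β ^ 1 * p k β) * (v k c - v kstar c) := by
      intro β; rw [Finset.mul_sum]; exact Finset.sum_congr rfl (fun k _ => by ring)
    simp only [this]
    have h0 : (0 : ℝ) = ∑ _k : Fin n, (0 : ℝ) := by simp
    rw [h0]
    apply tendsto_finset_sum
    intro k _
    by_cases hk : k = kstar
    · subst hk; simp
    · simpa using (key 1 k hk).mul_const (v k c - v kstar c)
  have := hA.sub ((hB a).mul (hB b))
  simp only [sub_zero, mul_zero, zero_mul] at this
  refine this.congr' ?_
  filter_upwards with β
  rw [hrw]
  ring
end

section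
/- Let s_1, …, s_n : ℝ^d → ℝ be twice continuously differentiable, let j ∈ {1,…,n}, fix z ∈ ℝ^d, and suppose the values s_1(z), …, s_n(z) have a unique maximizer k* with k* ≠ j. For β > 0 let H(β) denote the Hessian matrix at z of the InfoNCE loss ℓ_β(z) = log( Σ_k exp(β s_k(z)) ) - β s_j(z), and let H_k denote the Hessian of s_k at z. Then (1/β) H(β) → H_{k*} - H_j as β → ∞; consequently, if H_{k*} ≠ H_j, then ‖H(β)‖/β converges to ‖H_{k*} - H_j‖ > 0, i.e. the dominant curvature of the loss landscape at a suboptimal configuration scales linearly in β (Hessian sharpening). -/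
open Real Finset Filter

attribute [local instance] Matrix.normedAddCommGroup

/-- The `(a,b)` entry of the Hessian matrix of `f : ℝ^d → ℝ` at `z`, i.e. the second
partial derivative `∂_a ∂_b f (z)` along the standard basis vectors. -/
noncomputable def hessianEntry {d : ℕ} (f : EuclideanSpace ℝ (Fin d) → ℝ)
    (z : EuclideanSpace ℝ (Fin d)) (a b : Fin d) : ℝ :=
  fderiv ℝ (fun w => fderiv ℝ f w (EuclideanSpace.single b 1)) z (EuclideanSpace.single a 1)

/-- The Hessian matrix of `f : ℝ^d → ℝ` at `z`. -/
noncomputable def hessianMatrix {d : ℕ} (f : EuclideanSpace ℝ (Fin d) → ℝ)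
    (z : EuclideanSpace ℝ (Fin d)) : Matrix (Fin d) (Fin d) ℝ :=
  Matrix.of fun a b => hessianEntry f z a b

/-!
Write `p = softmax (β s(z))`. The Hessian of the InfoNCE loss at `z` is
`β (∑ₖ pₖ Hₖ - Hⱼ) + β² Cov_p(∇s(z))`, the last term being the covariance under `p` of the
gradients `∇sₖ(z)`. As `β → ∞`, `p` concentrates on the unique maximizer `k*` exponentially fast, so that
`β pₖ → 0` for `k ≠ k*`. Centering the covariance at `∇s_{k*}(z)` puts a factor `β pₖ` with
`k ≠ k*` into each of its terms, hence `β Cov_p → 0` and `H(β) / β → H_{k*} - Hⱼ`.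
-/

attribute [local instance] Matrix.normedSpace

open Topology

noncomputable def softmax {ι : Type*} [Fintype ι] (x : ι → ℝ) (k : ι) : ℝ :=
  exp (x k) / ∑ i, exp (x i)

section Softmax

variable {ι : Type*} [Fintype ι]

lemma sum_exp_pos [Nonempty ι] (x : ι → ℝ) : 0 < ∑ i, exp (x i) :=
  sum_pos (fun _ _ ↦ exp_pos _) univ_nonempty

lemma sum_softmax [Nonempty ι] (x : ι → ℝ) : ∑ k, softmax x k = 1 := by
  simp only [softmax, ← sum_div]
  exact div_self (sum_exp_pos x).ne'

lemma softmax_eq_exp_sub_log [Nonempty ι] (x : ι → ℝ) (k : ι) :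
    softmax x k = exp (x k - log (∑ i, exp (x i))) := by
  rw [exp_sub, exp_log (sum_exp_pos x), softmax]

lemma softmax_le_exp_sub (x : ι → ℝ) (k m : ι) : softmax x k ≤ exp (x k - x m) := by
  rw [exp_sub]
  exact div_le_div_of_nonneg_left (exp_pos _).le (exp_pos _)
    (single_le_sum (fun i _ ↦ (exp_pos (x i)).le) (mem_univ m))

variable {x : ι → ℝ} {k m : ι}

lemma tendsto_mul_softmax_of_lt (h : x k < x m) :
    Tendsto (fun β ↦ β * softmax (fun i ↦ β * x i) k) atTop (𝓝 0) := by
  have hdecay := tendsto_rpow_mul_exp_neg_mul_atTop_nhds_zero 1 (x m - x k) (sub_pos.2 h)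
  refine tendsto_of_tendsto_of_tendsto_of_le_of_le' tendsto_const_nhds hdecay ?_ ?_
  all_goals filter_upwards [eventually_ge_atTop 0] with β hβ
  · exact mul_nonneg hβ (div_nonneg (exp_pos _).le (sum_nonneg fun i _ ↦ (exp_pos _).le))
  · rw [rpow_one, show -(x m - x k) * β = β * x k - β * x m by ring]
    exact mul_le_mul_of_nonneg_left (softmax_le_exp_sub _ k m) hβ

lemma tendsto_softmax_of_lt (h : x k < x m) :
    Tendsto (fun β ↦ softmax (fun i ↦ β * x i) k) atTop (𝓝 0) := by
  refine ((tendsto_mul_softmax_of_lt h).div_atTop tendsto_id).congr' ?_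
  filter_upwards [eventually_ne_atTop 0] with β hβ
  exact mul_div_cancel_left₀ _ hβ

lemma tendsto_softmax_of_forall_lt [DecidableEq ι] (hm : ∀ k ≠ m, x k < x m) :
    Tendsto (fun β ↦ softmax (fun i ↦ β * x i)) atTop (𝓝 (Pi.single m 1)) := by
  have : Nonempty ι := ⟨m⟩
  refine tendsto_pi_nhds.2 fun k ↦ ?_
  rcases eq_or_ne k m with rfl | hk
  · have hrest := tendsto_finsetSum (univ.erase k) fun i hi ↦
      tendsto_softmax_of_lt (hm i (ne_of_mem_erase hi))
    rw [sum_const_zero] at hrest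
    rw [Pi.single_eq_same, ← sub_zero 1]
    refine ((tendsto_const_nhds (x := (1 : ℝ))).sub hrest).congr fun β ↦ ?_
    rw [← sum_softmax (fun i ↦ β * x i), ← add_sum_erase _ _ (mem_univ k)]
    ring
  · simpa [Pi.single_eq_of_ne hk] using tendsto_softmax_of_lt (hm k hk)

lemma tendsto_sum_softmax_mul (hm : ∀ k ≠ m, x k < x m) (c : ι → ℝ) :
    Tendsto (fun β ↦ ∑ k, softmax (fun i ↦ β * x i) k * c k) atTop (𝓝 (c m)) := by
  classical
  have hlim := tendsto_finsetSum univ fun k _ ↦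
    (((continuous_apply k).tendsto _).comp (tendsto_softmax_of_forall_lt hm)).mul_const (c k)
  simpa [Pi.single_apply] using hlim

lemma tendsto_mul_sum_softmax_mul (hm : ∀ k ≠ m, x k < x m) {c : ι → ℝ} (hc : c m = 0) :
    Tendsto (fun β ↦ β * ∑ k, softmax (fun i ↦ β * x i) k * c k) atTop (𝓝 0) := by
  simp_rw [mul_sum, ← mul_assoc]
  rw [← sum_const_zero (s := (univ : Finset ι))]
  refine tendsto_finsetSum _ fun k _ ↦ ?_
  rcases eq_or_ne k m with rfl | hk
  · simp [hc]
  · simpa using (tendsto_mul_softmax_of_lt (hm k hk)).mul_const (c k)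

end Softmax

section Covariance

variable {ι : Type*} [Fintype ι]

def weightedCov (p u v : ι → ℝ) : ℝ :=
  ∑ k, p k * (u k * v k) - (∑ k, p k * u k) * (∑ k, p k * v k)

lemma weightedCov_sub_const {p : ι → ℝ} (hp : ∑ k, p k = 1) (u v : ι → ℝ) (c e : ℝ) :
    weightedCov p (fun k ↦ u k - c) (fun k ↦ v k - e) = weightedCov p u v := by
  have hsub (w : ι → ℝ) (t : ℝ) : ∑ k, p k * (w k - t) = ∑ k, p k * w k - t := by
    simp only [mul_sub, sum_sub_distrib, ← sum_mul, hp, one_mul]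
  have hprod : ∑ k, p k * ((u k - c) * (v k - e))
      = ∑ k, p k * (u k * v k) - c * ∑ k, p k * v k - e * ∑ k, p k * u k + c * e := by
    have hexpand (k : ι) : p k * ((u k - c) * (v k - e))
        = p k * (u k * v k) - c * (p k * v k) - e * (p k * u k) + c * e * p k := by ring
    simp only [hexpand, sum_add_distrib, sum_sub_distrib, ← mul_sum, hp, mul_one]
  simp only [weightedCov, hsub, hprod]
  ring

lemma tendsto_mul_weightedCov_softmax {x : ι → ℝ} {m : ι} (hm : ∀ k ≠ m, x k < x m)
    (u v : ι → ℝ) :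
    Tendsto (fun β ↦ β * weightedCov (softmax (fun i ↦ β * x i)) u v) atTop (𝓝 0) := by
  have : Nonempty ι := ⟨m⟩
  have hcentered := (tendsto_mul_sum_softmax_mul hm (c := fun k ↦ (u k - u m) * (v k - v m))
    (by simp)).sub ((tendsto_mul_sum_softmax_mul hm (c := fun k ↦ u k - u m) (by simp)).mul
    ((tendsto_sum_softmax_mul hm fun k ↦ v k - v m)))
  rw [sub_self, mul_zero, sub_zero] at hcentered
  refine hcentered.congr fun β ↦ ?_
  rw [← weightedCov_sub_const (sum_softmax _) u v (u m) (v m), weightedCov]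
  ring

end Covariance

section Calculus

variable {E : Type*} [NormedAddCommGroup E] [NormedSpace ℝ E] {ι : Type*} [Fintype ι]
  {g : ι → E → ℝ} {g' : ι → E →L[ℝ] ℝ} {z : E}

lemma hasFDerivAt_log_sum_exp [Nonempty ι] (hg : ∀ k, HasFDerivAt (g k) (g' k) z) :
    HasFDerivAt (fun w ↦ log (∑ k, exp (g k w))) (∑ k, softmax (fun i ↦ g i z) k • g' k) z := by
  convert (HasFDerivAt.fun_sum fun k _ ↦ (hg k).exp).log (sum_exp_pos _).ne' using 1
  simp only [softmax, smul_sum, smul_smul, div_eq_inv_mul]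

lemma hasFDerivAt_softmax (hg : ∀ k, HasFDerivAt (g k) (g' k) z) (k : ι) :
    HasFDerivAt (fun w ↦ softmax (fun i ↦ g i w) k)
      (softmax (fun i ↦ g i z) k • (g' k - ∑ i, softmax (fun i ↦ g i z) i • g' i)) z := by
  have : Nonempty ι := ⟨k⟩
  convert ((hg k).fun_sub (hasFDerivAt_log_sum_exp hg)).exp using 1
  · exact funext fun w ↦ softmax_eq_exp_sub_log _ k
  · rw [softmax_eq_exp_sub_log]

end Calculus

noncomputable def infoNCELoss {E ι : Type*} [Fintype ι] (s : ι → E → ℝ) (j : ι) (β : ℝ) (w : E) :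
    ℝ :=
  log (∑ k, exp (β * s k w)) - β * s j w

section InfoNCE

variable {E : Type*} [NormedAddCommGroup E] [NormedSpace ℝ E] {ι : Type*} [Fintype ι]
  {s : ι → E → ℝ} (j : ι) (β : ℝ)

lemma fderiv_infoNCELoss_apply (hs : ∀ k, Differentiable ℝ (s k)) (w v : E) :
    fderiv ℝ (infoNCELoss s j β) w v
      = β * (∑ k, softmax (fun i ↦ β * s i w) k * fderiv ℝ (s k) w v - fderiv ℝ (s j) w v) := by
  have : Nonempty ι := ⟨j⟩
  have hscaled (k : ι) : HasFDerivAt (fun w ↦ β * s k w) (β • fderiv ℝ (s k) w) w :=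
    (hs k w).hasFDerivAt.const_mul β
  rw [HasFDerivAt.fderiv (f := infoNCELoss s j β)
    ((hasFDerivAt_log_sum_exp hscaled).fun_sub (hscaled j))]
  simp only [sub_apply, _root_.sum_apply, smul_apply, smul_eq_mul, mul_sub, mul_sum]
  congr 1
  exact sum_congr rfl fun k _ ↦ by ring

lemma fderiv_fderiv_infoNCELoss_apply (hs : ∀ k, ContDiff ℝ 2 (s k)) (z u v : E) :
    fderiv ℝ (fun w ↦ fderiv ℝ (infoNCELoss s j β) w v) z u
      = β * (∑ k, softmax (fun i ↦ β * s i z) k * fderiv ℝ (fun w ↦ fderiv ℝ (s k) w v) z u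
          - fderiv ℝ (fun w ↦ fderiv ℝ (s j) w v) z u)
        + β ^ 2 * weightedCov (softmax (fun i ↦ β * s i z))
            (fun k ↦ fderiv ℝ (s k) z u) (fun k ↦ fderiv ℝ (s k) z v) := by
  have hdiff (k : ι) : Differentiable ℝ (s k) := (hs k).differentiable (by norm_num)
  have hpartial (k : ι) : HasFDerivAt (fun w ↦ fderiv ℝ (s k) w v)
      (fderiv ℝ (fun w ↦ fderiv ℝ (s k) w v) z) z :=
    ((((hs k).fderiv_right (m := 1) (by norm_num)).differentiable (by norm_num) z).clm_apply
      (differentiableAt_const v)).hasFDerivAt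
  have hscaled (k : ι) : HasFDerivAt (fun w ↦ β * s k w) (β • fderiv ℝ (s k) z) z :=
    (hdiff k z).hasFDerivAt.const_mul β
  have hgrad := (HasFDerivAt.fun_sum (u := univ) fun k _ ↦
    (hasFDerivAt_softmax hscaled k).fun_mul (hpartial k)).fun_sub (hpartial j)
  simp_rw [fderiv_infoNCELoss_apply j β hdiff]
  rw [(hgrad.const_mul β).fderiv]
  simp only [smul_apply, sub_apply, add_apply, FunLike.coe_sum, Finset.sum_apply, smul_eq_mul,
    weightedCov]
  set p := softmax (fun i ↦ β * s i z)
  set mean := ∑ i, p i * fderiv ℝ (s i) z u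
  have hmean : ∑ i, p i * (β * fderiv ℝ (s i) z u) = β * mean := by
    simp only [mean, mul_sum]
    exact sum_congr rfl fun _ _ ↦ by ring
  rw [hmean]
  clear_value p mean
  have hcov : ∑ k, fderiv ℝ (s k) z v * (p k * (β * fderiv ℝ (s k) z u - β * mean))
      = β * (∑ k, p k * (fderiv ℝ (s k) z u * fderiv ℝ (s k) z v)
          - mean * ∑ k, p k * fderiv ℝ (s k) z v) := by
    rw [mul_sub, mul_sum, mul_sum, mul_sum, ← sum_sub_distrib]
    exact sum_congr rfl fun _ _ ↦ by ring
  rw [sum_add_distrib, hcov]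
  ring

lemma tendsto_inv_mul_fderiv_fderiv_infoNCELoss (hs : ∀ k, ContDiff ℝ 2 (s k)) {z : E}
    {m : ι} (hm : ∀ k ≠ m, s k z < s m z) (u v : E) :
    Tendsto (fun β ↦ β⁻¹ * fderiv ℝ (fun w ↦ fderiv ℝ (infoNCELoss s j β) w v) z u) atTop
      (𝓝 (fderiv ℝ (fun w ↦ fderiv ℝ (s m) w v) z u
        - fderiv ℝ (fun w ↦ fderiv ℝ (s j) w v) z u)) := by
  have hlim := ((tendsto_sum_softmax_mul hm
    fun k ↦ fderiv ℝ (fun w ↦ fderiv ℝ (s k) w v) z u).sub_const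
    (fderiv ℝ (fun w ↦ fderiv ℝ (s j) w v) z u)).add
    (tendsto_mul_weightedCov_softmax hm (fun k ↦ fderiv ℝ (s k) z u) (fun k ↦ fderiv ℝ (s k) z v))
  rw [add_zero] at hlim
  refine hlim.congr' ?_
  filter_upwards [eventually_ne_atTop 0] with β hβ
  rw [fderiv_fderiv_infoNCELoss_apply j β hs]
  field_simp

end InfoNCE

lemma tendsto_norm_div_of_tendsto_inv_smul {F : Type*} [SeminormedAddCommGroup F]
    [NormedSpace ℝ F] {f : ℝ → F} {L : F} (h : Tendsto (fun β ↦ β⁻¹ • f β) atTop (𝓝 L)) :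
    Tendsto (fun β ↦ ‖f β‖ / β) atTop (𝓝 ‖L‖) := by
  refine h.norm.congr' ?_
  filter_upwards [eventually_gt_atTop 0] with β hβ
  rw [norm_smul, norm_inv, Real.norm_of_nonneg hβ.le, inv_mul_eq_div]

theorem infoNCE_hessian_sharpening_general
    (d n : ℕ)
    (s : Fin n → EuclideanSpace ℝ (Fin d) → ℝ)
    (hs : ∀ k, ContDiff ℝ 2 (s k))
    (j kstar : Fin n) (z : EuclideanSpace ℝ (Fin d))
    (hks : ∀ k, k ≠ kstar → s k z < s kstar z)
    (ℓ : ℝ → EuclideanSpace ℝ (Fin d) → ℝ)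
    (hℓ : ∀ β w, ℓ β w = Real.log (∑ k, Real.exp (β * s k w)) - β * s j w) :
    (∀ a b : Fin d,
      Tendsto (fun β : ℝ => (1 / β) * hessianEntry (ℓ β) z a b) atTop
        (nhds (hessianEntry (s kstar) z a b - hessianEntry (s j) z a b)))
    ∧ (hessianMatrix (s kstar) z ≠ hessianMatrix (s j) z →
        Tendsto (fun β : ℝ => ‖hessianMatrix (ℓ β) z‖ / β) atTop
          (nhds ‖hessianMatrix (s kstar) z - hessianMatrix (s j) z‖)
        ∧ 0 < ‖hessianMatrix (s kstar) z - hessianMatrix (s j) z‖) := by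
  obtain rfl : ℓ = infoNCELoss s j := funext fun β ↦ funext (hℓ β)
  have hentry (a b : Fin d) :
      Tendsto (fun β : ℝ => (1 / β) * hessianEntry (infoNCELoss s j β) z a b) atTop
        (𝓝 (hessianEntry (s kstar) z a b - hessianEntry (s j) z a b)) := by
    simpa only [one_div, hessianEntry] using tendsto_inv_mul_fderiv_fderiv_infoNCELoss j hs hks
      (EuclideanSpace.single a 1) (EuclideanSpace.single b 1)
  refine ⟨hentry, fun hne ↦ ⟨?_, norm_pos_iff.2 (sub_ne_zero.2 hne)⟩⟩
  refine tendsto_norm_div_of_tendsto_inv_smul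
    (tendsto_pi_nhds.2 fun a ↦ tendsto_pi_nhds.2 fun b ↦ ?_)
  simpa [hessianMatrix] using hentry a b

/-- For `C²` functions `s_1, …, s_n : ℝ^d → ℝ`, index `j`, a point `z`,
and a unique maximizer `k* ≠ j` of the values `s_k(z)`, the Hessian `H(β)` at `z` of the
InfoNCE loss `ℓ_β(z) = log(Σ_k exp(β s_k(z))) - β s_j(z)` satisfies
`(1/β) H(β) → H_{k*} - H_j` as `β → ∞` (entrywise); consequently, if `H_{k*} ≠ H_j`,
then `‖H(β)‖/β → ‖H_{k*} - H_j‖ > 0`, i.e. the dominant curvature at a suboptimal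
configuration scales linearly in `β` (Hessian sharpening). -/
theorem infoNCE_hessian_sharpening
    (d n : ℕ) (hn : 1 ≤ n)
    (s : Fin n → EuclideanSpace ℝ (Fin d) → ℝ)
    (hs : ∀ k, ContDiff ℝ 2 (s k))
    (j kstar : Fin n) (hkj : kstar ≠ j) (z : EuclideanSpace ℝ (Fin d))
    (hks : ∀ k, k ≠ kstar → s k z < s kstar z)
    (ℓ : ℝ → EuclideanSpace ℝ (Fin d) → ℝ)
    (hℓ : ∀ β w, ℓ β w = Real.log (∑ k, Real.exp (β * s k w)) - β * s j w) :
    (∀ a b : Fin d,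
      Tendsto (fun β : ℝ => (1 / β) * hessianEntry (ℓ β) z a b) atTop
        (nhds (hessianEntry (s kstar) z a b - hessianEntry (s j) z a b)))
    ∧ (hessianMatrix (s kstar) z ≠ hessianMatrix (s j) z →
        Tendsto (fun β : ℝ => ‖hessianMatrix (ℓ β) z‖ / β) atTop
          (nhds ‖hessianMatrix (s kstar) z - hessianMatrix (s j) z‖)
        ∧ 0 < ‖hessianMatrix (s kstar) z - hessianMatrix (s j) z‖) :=
  infoNCE_hessian_sharpening_general d n s hs j kstar z hks ℓ hℓ
end

section
/- Let X be a compact metric space, let μ be a finite Borel measure on X with full support, let U_0 : X → ℝ be continuous with minimum m = min_X U_0, and let F_β : X → ℝ (β > 0) be continuous functions converging uniformly on X to U_0 as β → ∞. For β > 0, let π_β be the probability measure with density proportional to exp(-β F_β) with respect to μ. Then for every δ > 0, π_β( { x ∈ X : U_0(x) ≥ m + δ } ) → 0 as β → ∞; i.e. the quasi-stationary Gibbs measures associated with the annealed InfoNCE potentials concentrate on neighborhoods of the global minimizer set of the limiting potential. -/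
open Real Filter MeasureTheory
open scoped ENNReal

/-!
If `F_β` is within `δ/4` of `U₀`, then `F_β ≥ m + 3δ/4` on `{U₀ ≥ m + δ}` while
`F_β ≤ m + δ/2` on the open set `V = {U₀ < m + δ/4}`, which has positive mass by full support.
Comparing the numerator with `μ X · e^{-β(m + 3δ/4)}` and the partition function with
`μ V · e^{-β(m + δ/2)}` bounds the Gibbs mass of `{U₀ ≥ m + δ}` by `(μ X / μ V) e^{-βδ/4}`.
-/

lemma setLIntegral_ofReal_exp_neg_mul_le {X : Type*} [MeasurableSpace X] (μ : Measure X)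
    {f : X → ℝ} {S : Set X} (hS : MeasurableSet S) {a β : ℝ} (hβ : 0 ≤ β)
    (hSa : ∀ x ∈ S, a ≤ f x) :
    ∫⁻ x in S, ENNReal.ofReal (exp (-β * f x)) ∂μ ≤ ENNReal.ofReal (exp (-β * a)) * μ S := by
  rw [← setLIntegral_const]
  refine setLIntegral_mono' hS fun x hx => ENNReal.ofReal_le_ofReal (exp_le_exp.mpr ?_)
  nlinarith [hSa x hx]

lemma ofReal_exp_neg_mul_mul_le_lintegral {X : Type*} [MeasurableSpace X] (μ : Measure X)
    {f : X → ℝ} {V : Set X} (hV : MeasurableSet V) {b β : ℝ} (hβ : 0 ≤ β)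
    (hVb : ∀ x ∈ V, f x ≤ b) :
    ENNReal.ofReal (exp (-β * b)) * μ V ≤ ∫⁻ x, ENNReal.ofReal (exp (-β * f x)) ∂μ := by
  rw [← setLIntegral_const]
  refine le_trans (setLIntegral_mono' hV fun x hx => ?_) (setLIntegral_le_lintegral V _)
  refine ENNReal.ofReal_le_ofReal (exp_le_exp.mpr ?_)
  nlinarith [hVb x hx]

lemma gibbs_ratio_le {X : Type*} [MeasurableSpace X] (μ : Measure X) {f : X → ℝ}
    {S V : Set X} (hS : MeasurableSet S) (hV : MeasurableSet V) (hV0 : μ V ≠ 0)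
    (hVtop : μ V ≠ ∞) {a b β : ℝ} (hβ : 0 ≤ β) (hSa : ∀ x ∈ S, a ≤ f x)
    (hVb : ∀ x ∈ V, f x ≤ b) :
    (∫⁻ x in S, ENNReal.ofReal (exp (-β * f x)) ∂μ) /
        ∫⁻ x, ENNReal.ofReal (exp (-β * f x)) ∂μ ≤
      μ S / μ V * ENNReal.ofReal (exp (-β * (a - b))) := by
  have hsplit : ENNReal.ofReal (exp (-β * a)) =
      ENNReal.ofReal (exp (-β * (a - b))) * ENNReal.ofReal (exp (-β * b)) := by
    rw [← ENNReal.ofReal_mul (exp_nonneg _), ← exp_add]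
    ring_nf
  refine ENNReal.div_le_of_le_mul ?_
  calc ∫⁻ x in S, ENNReal.ofReal (exp (-β * f x)) ∂μ
      ≤ ENNReal.ofReal (exp (-β * a)) * μ S := setLIntegral_ofReal_exp_neg_mul_le μ hS hβ hSa
    _ = μ S / μ V * ENNReal.ofReal (exp (-β * (a - b))) *
          (ENNReal.ofReal (exp (-β * b)) * μ V) := by
      conv_lhs => rw [hsplit, ← ENNReal.div_mul_cancel hV0 hVtop (b := μ S)]
      ring
    _ ≤ μ S / μ V * ENNReal.ofReal (exp (-β * (a - b))) *
          ∫⁻ x, ENNReal.ofReal (exp (-β * f x)) ∂μ := by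
      gcongr
      exact ofReal_exp_neg_mul_mul_le_lintegral μ hV hβ hVb

lemma ENNReal.tendsto_const_mul_ofReal_exp_neg_mul_atTop {C : ℝ≥0∞} (hC : C ≠ ∞) {c : ℝ}
    (hc : 0 < c) :
    Tendsto (fun β : ℝ => C * ENNReal.ofReal (exp (-β * c))) atTop (nhds 0) := by
  have hexp : Tendsto (fun β : ℝ => exp (-β * c)) atTop (nhds 0) := by
    simpa only [Function.comp_def, id, neg_mul] using
      tendsto_exp_neg_atTop_nhds_zero.comp (tendsto_id.atTop_mul_const hc)
  simpa using ENNReal.Tendsto.const_mul (ENNReal.tendsto_ofReal hexp) (Or.inr hC)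

theorem gibbs_concentration_annealed_potential_general
    (X : Type*) [MetricSpace X]
    [MeasurableSpace X] [BorelSpace X]
    (μ : Measure X) [IsFiniteMeasure μ]
    (hsupp : ∀ U : Set X, IsOpen U → U.Nonempty → 0 < μ U)
    (U₀ : X → ℝ) (hU₀ : Continuous U₀)
    (m : ℝ) (hm : IsLeast (Set.range U₀) m)
    (F : ℝ → X → ℝ)
    (hunif : ∀ ε > (0 : ℝ), ∃ B : ℝ, ∀ β ≥ B, ∀ x, |F β x - U₀ x| ≤ ε) :
    ∀ δ > (0 : ℝ),
      Tendsto (fun β : ℝ =>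
          (∫⁻ x in {x | m + δ ≤ U₀ x}, ENNReal.ofReal (Real.exp (-β * F β x)) ∂μ) /
            ∫⁻ x, ENNReal.ofReal (Real.exp (-β * F β x)) ∂μ)
        atTop (nhds 0) := by
  intro δ hδ
  obtain ⟨B, hB⟩ := hunif (δ / 4) (by positivity)
  obtain ⟨x₀, hx₀⟩ := hm.1
  set S : Set X := {x | m + δ ≤ U₀ x}
  set V : Set X := U₀ ⁻¹' Set.Iio (m + δ / 4)
  have hVopen : IsOpen V := isOpen_Iio.preimage hU₀
  have hVpos : 0 < μ V := hsupp V hVopen ⟨x₀, by simp [V, hx₀]; linarith⟩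
  have hlim := ENNReal.tendsto_const_mul_ofReal_exp_neg_mul_atTop
    (ENNReal.div_lt_top (measure_ne_top μ S) hVpos.ne').ne
    (c := m + 3 * δ / 4 - (m + δ / 2)) (by linarith)
  refine tendsto_of_tendsto_of_tendsto_of_le_of_le' tendsto_const_nhds hlim
    (Eventually.of_forall fun _ => zero_le) ?_
  filter_upwards [eventually_ge_atTop (max B 0)] with β hβ
  have hFU : ∀ x, |F β x - U₀ x| ≤ δ / 4 := hB β (le_of_max_le_left hβ)
  refine gibbs_ratio_le μ (measurableSet_le measurable_const hU₀.measurable)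
    hVopen.measurableSet hVpos.ne' (measure_ne_top μ V) (le_of_max_le_right hβ)
    (fun x hx => ?_) (fun x hx => ?_)
  · linarith [(abs_le.mp (hFU x)).1, show m + δ ≤ U₀ x from hx]
  · linarith [(abs_le.mp (hFU x)).2, show U₀ x < m + δ / 4 from hx]

/-- Let `X` be a compact metric space, `μ` a finite Borel measure with
full support, `U₀ : X → ℝ` continuous with minimum `m`, and `F_β : X → ℝ` (`β > 0`)
continuous potentials converging uniformly to `U₀` as `β → ∞`. Then the Gibbs measures
`π_β` with density proportional to `exp(-β F_β)` with respect to `μ` satisfy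
`π_β({x : U₀(x) ≥ m + δ}) → 0` as `β → ∞`, for every `δ > 0`; i.e. the quasi-stationary
Gibbs measures of the annealed potentials concentrate on neighborhoods of the global
minimizer set of the limiting potential. -/
theorem gibbs_concentration_annealed_potential
    (X : Type*) [MetricSpace X] [CompactSpace X] [Nonempty X]
    [MeasurableSpace X] [BorelSpace X]
    (μ : Measure X) [IsFiniteMeasure μ]
    (hsupp : ∀ U : Set X, IsOpen U → U.Nonempty → 0 < μ U)
    (U₀ : X → ℝ) (hU₀ : Continuous U₀)
    (m : ℝ) (hm : IsLeast (Set.range U₀) m)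
    (F : ℝ → X → ℝ) (hF : ∀ β > (0 : ℝ), Continuous (F β))
    (hunif : ∀ ε > (0 : ℝ), ∃ B : ℝ, ∀ β ≥ B, ∀ x, |F β x - U₀ x| ≤ ε) :
    ∀ δ > (0 : ℝ),
      Tendsto (fun β : ℝ =>
          (∫⁻ x in {x | m + δ ≤ U₀ x}, ENNReal.ofReal (Real.exp (-β * F β x)) ∂μ) /
            ∫⁻ x, ENNReal.ofReal (Real.exp (-β * F β x)) ∂μ)
        atTop (nhds 0) :=
  gibbs_concentration_annealed_potential_general X μ hsupp U₀ hU₀ m hm F hunif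
end
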